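/- In the free semigroup F on two generators a and b, the set A = Fa (all words ending in a) is a J-set, but A^{-1}A is not an IP*-set in F: A^{-1}A does not intersect the IP-set generated by the sequence {b^n}_{n=1}^∞. -/

import Mathlib

namespace Stmt7

/-- The free semigroup on two generators. -/
abbrev F2 := FreeSemigroup Bool

/-- The generator `a`. -/
def genA : F2 := FreeSemigroup.of true

/-- The generator `b`. -/
def genB : F2 := FreeSemigroup.of false

/-- `A = Fa`, the set of words ending in `a`. -/
def A : Set F2 := {x | x = genA ∨ ∃ w : F2, x = w * genA}

/-- The (noncommutative) product of a list of semigroup elements, `none` iff empty. -/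
def listProd {S : Type*} [Semigroup S] : List S → Option S
  | [] => none
  | x :: l => some (l.foldl (· * ·) x)

/-- `A` is a J-set in the (not necessarily commutative) semigroup `S`: for every
finite family of sequences there exist `m ≥ 1`, increasing indices `t 0 < … < t (m-1)`
and elements `w 0, …, w m` such that for each `f` in the family the interleaved
product `w 0 * f (t 0) * w 1 * ⋯ * w (m-1) * f (t (m-1)) * w m` lies in `A`. -/
def IsJSetNC {S : Type*} [Semigroup S] (A : Set S) : Prop :=
  ∀ Fam : Finset (ℕ → S), ∃ m : ℕ, 0 < m ∧ ∃ t : Fin m → ℕ, StrictMono t ∧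
    ∃ w : Fin (m + 1) → S, ∀ f ∈ Fam, ∃ p,
      listProd ((List.ofFn fun i : Fin m => [w i.castSucc, f (t i)]).flatten
          ++ [w (Fin.last m)]) = some p ∧ p ∈ A

/-- `bpow n = b^(n+1)`. -/
def bpow : ℕ → F2
  | 0 => genB
  | n + 1 => bpow n * genB

/-!
`A` contains the left ideal `F * a`, and any set containing a left ideal `S * c` is a J-set: take
`m = 1` and `w 0 = w 1 = c`. For the second part, "last letter" is a homomorphism from the free
semigroup onto the right-zero semigroup on the alphabet. Every finite product of powers of `b`
therefore ends in `b`, while `u * g ∈ A` forces `g` to end in `a`.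
-/

def RightZero (α : Type*) := α

instance (α : Type*) : Semigroup (RightZero α) where
  mul _ y := y
  mul_assoc _ _ _ := rfl

def RightZero.subsemigroup {α : Type*} (s : Set α) : Subsemigroup (RightZero α) where
  carrier := s
  mul_mem' _ hy := hy

def lastLetter {α : Type*} : FreeSemigroup α →ₙ* RightZero α := FreeSemigroup.lift id

@[simp]
lemma lastLetter_mul {α : Type*} (x y : FreeSemigroup α) :
    lastLetter (x * y) = lastLetter y :=
  map_mul lastLetter x y

lemma lastLetter_of {α : Type*} (a : α) : lastLetter (FreeSemigroup.of a) = a :=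
  FreeSemigroup.lift_of _ _

lemma Hindman.FP_subset_of_forall_mem {M : Type*} [Semigroup M] (S : Subsemigroup M)
    {a : Stream' M} (ha : ∀ n, a n ∈ S) : Hindman.FP a ⊆ S := by
  intro g hg
  induction hg with
  | head' a => exact ha 0
  | tail' a _ _ ih => exact ih fun n => ha (n + 1)
  | cons' a _ _ ih => exact S.mul_mem (ha 0) (ih fun n => ha (n + 1))

lemma isJSetNC_of_forall_mul_mem {S : Type*} [Semigroup S] {A : Set S} {c : S}
    (hc : ∀ x, x * c ∈ A) : IsJSetNC A :=
  fun _ => ⟨1, one_pos, fun _ => 0, Subsingleton.strictMono _, fun _ => c,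
    fun f _ => ⟨c * f 0 * c, rfl, hc _⟩⟩

lemma lastLetter_of_mem_A {x : F2} (hx : x ∈ A) : lastLetter x = true := by
  rcases hx with rfl | ⟨w, rfl⟩
  · exact lastLetter_of true
  · rw [lastLetter_mul]; exact lastLetter_of true

lemma lastLetter_bpow (n : ℕ) : lastLetter (bpow n) = false := by
  cases n with
  | zero => exact lastLetter_of false
  | succ n => rw [bpow, lastLetter_mul]; exact lastLetter_of false

/-- In the free semigroup on two generators `a, b`, the set `A = Fa` is a J-set, but
`A⁻¹A` is not an `IP⋆`-set: it misses the IP-set generated by `{b^n}_{n=1}^∞`. -/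
theorem stmt_7 :
    IsJSetNC A ∧ ∀ g ∈ Hindman.FP (bpow : Stream' F2), ¬∃ u ∈ A, u * g ∈ A := by
  refine ⟨isJSetNC_of_forall_mul_mem fun x => Or.inr ⟨x, rfl⟩, ?_⟩
  rintro g hg ⟨u, -, hug⟩
  have hg_b : lastLetter g = false :=
    Hindman.FP_subset_of_forall_mem ((RightZero.subsemigroup {false}).comap lastLetter)
      lastLetter_bpow hg
  have hg_a : lastLetter g = true := by simpa using lastLetter_of_mem_A hug
  exact Bool.false_ne_true (hg_b.symm.trans hg_a)

end Stmt7
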